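/- Owings' theorem on ranks of joins (first Cantor-Bendixson derivative case): for closed sets P, Q ⊆ 2^ω and points X ∈ P, Y ∈ Q, X ⊕ Y ∈ D(P ⊗ Q) if and only if X ∈ D(P) or Y ∈ D(Q). -/

import Mathlib

/-! The join is a homeomorphism `2^ω × 2^ω ≃ₜ 2^ω` carrying `P × Q` onto `P ⊗ Q`, and
homeomorphisms commute with the Cantor–Bendixson derivative. In a product, removing the
point `(x, y)` from `s ×ˢ t` leaves `(s \ {x}) ×ˢ t ∪ s ×ˢ (t \ {y})`, whose closure is
`closure (s \ {x}) ×ˢ closure t ∪ closure s ×ˢ closure (t \ {y})`; so `(x, y)` is a limit of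
other points of `s ×ˢ t` exactly when `x` is one of `s` or `y` one of `t`. -/

open Set Topology Filter

abbrev Cantor : Type := ℕ → Bool

def join (X Y : Cantor) : Cantor := fun n => if n % 2 = 0 then X (n / 2) else Y (n / 2)

def IsolatedIn {α : Type*} [TopologicalSpace α] (x : α) (S : Set α) : Prop :=
  ∃ U : Set α, IsOpen U ∧ U ∩ S = {x}

def cbDeriv {α : Type*} [TopologicalSpace α] (S : Set α) : Set α :=
  {x ∈ S | x ∈ closure (S \ {x})}

noncomputable def cbIter {X : Type*} [TopologicalSpace X] (P : Set X) (α : Ordinal) : Set X :=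
  Ordinal.limitRecOn α P (fun _ S => cbDeriv S) (fun o _ ih => ⋂ β : {β // β < o}, ih β.1 β.2)

section CantorBendixson

variable {α β : Type*} [TopologicalSpace α] [TopologicalSpace β]

theorem Homeomorph.mem_cbDeriv_image_iff (e : α ≃ₜ β) {S : Set α} {x : α} :
    e x ∈ cbDeriv (e '' S) ↔ x ∈ cbDeriv S := by
  simp only [cbDeriv, mem_ofPred_eq, ← image_singleton, ← image_sdiff e.injective,
    ← e.image_closure, e.injective.mem_set_image]

theorem mem_cbDeriv_prod_iff {s : Set α} {t : Set β} {x : α} {y : β} (hx : x ∈ s)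
    (hy : y ∈ t) :
    (x, y) ∈ cbDeriv (s ×ˢ t) ↔ x ∈ cbDeriv s ∨ y ∈ cbDeriv t := by
  have hxs := subset_closure hx
  have hyt := subset_closure hy
  simp only [cbDeriv, mem_ofPred_eq, ← singleton_prod_singleton, prod_sdiff_prod,
    closure_union, closure_prod_eq, mem_union, mem_prod]
  tauto

end CantorBendixson

def joinHomeo : Cantor × Cantor ≃ₜ Cantor where
  toFun p := join p.1 p.2
  invFun Z := (fun n => Z (2 * n), fun n => Z (2 * n + 1))
  left_inv p := by
    ext n
    · simp only [_root_.join, if_pos (show 2 * n % 2 = 0 by omega),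
        Nat.mul_div_cancel_left n two_pos]
    · simp only [_root_.join, if_neg (show (2 * n + 1) % 2 ≠ 0 by omega),
        show (2 * n + 1) / 2 = n by omega]
  right_inv Z := by
    funext n
    simp only [_root_.join]
    split <;> congr 1 <;> omega
  continuous_toFun := continuous_pi fun n => by
    simp only [_root_.join]
    split
    · exact (continuous_apply _).comp continuous_fst
    · exact (continuous_apply _).comp continuous_snd
  continuous_invFun := by fun_prop

theorem setOf_join_eq_image (P Q : Set Cantor) :
    {Z : Cantor | ∃ X ∈ P, ∃ Y ∈ Q, Z = join X Y} = joinHomeo '' (P ×ˢ Q) := by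
  ext Z
  constructor
  · rintro ⟨X, hX, Y, hY, rfl⟩
    exact ⟨(X, Y), ⟨hX, hY⟩, rfl⟩
  · rintro ⟨⟨X, Y⟩, ⟨hX, hY⟩, rfl⟩
    exact ⟨X, hX, Y, hY, rfl⟩

theorem owings_first_derivative_general (P Q : Set Cantor)
    (X Y : Cantor) (hX : X ∈ P) (hY : Y ∈ Q) :
    join X Y ∈ cbDeriv {Z : Cantor | ∃ X ∈ P, ∃ Y ∈ Q, Z = join X Y} ↔
      X ∈ cbDeriv P ∨ Y ∈ cbDeriv Q := by
  rw [setOf_join_eq_image, show join X Y = joinHomeo (X, Y) from rfl,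
    joinHomeo.mem_cbDeriv_image_iff, mem_cbDeriv_prod_iff hX hY]

/-- Owings' theorem, first-derivative case: `X ⊕ Y ∈ D(P ⊗ Q)` iff `X ∈ D(P)` or `Y ∈ D(Q)`. -/
theorem owings_first_derivative (P Q : Set Cantor) (hP : IsClosed P) (hQ : IsClosed Q)
    (X Y : Cantor) (hX : X ∈ P) (hY : Y ∈ Q) :
    join X Y ∈ cbDeriv {Z : Cantor | ∃ X ∈ P, ∃ Y ∈ Q, Z = join X Y} ↔
      X ∈ cbDeriv P ∨ Y ∈ cbDeriv Q :=
  owings_first_derivative_general P Q X Y hX hY
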